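/- Every monotone multilinear Boolean circuit is 1-multilinear: for each output gate o of the circuit and each prime implicant p of the function computed at o, there is a term t ∈ T(o) representing p in which no variable occurs more than once. -/

import Mathlib

open BigOperators

namespace MC

/-- A gate label: an input gate labeled by a variable or a Boolean constant,
or an OR/AND gate with the indices of its two direct predecessors. -/
inductive GateLabel (V : Type) where
  | var (v : V)
  | const (b : Bool)
  | or (a b : ℕ)
  | and (a b : ℕ)

def GateLabel.isOp {V : Type} : GateLabel V → Bool
  | .or _ _ => true
  | .and _ _ => true
  | _ => false

def GateLabel.isAnd {V : Type} : GateLabel V → Bool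
  | .and _ _ => true
  | _ => false

def GateLabel.isOr {V : Type} : GateLabel V → Bool
  | .or _ _ => true
  | _ => false

/-- A monotone Boolean circuit: a finite DAG whose gates are numbered
`0, …, n-1` in topological order (direct predecessors of a gate have smaller
indices, which enforces acyclicity). Gates of indegree 0 are labeled by
variables or Boolean constants, the remaining gates are OR/AND gates of
indegree 2. -/
structure Circuit (V : Type) where
  n : ℕ
  label : Fin n → GateLabel V
  wf : ∀ (i : Fin n) (a b : ℕ),
    (label i = .or a b ∨ label i = .and a b) → a < i.1 ∧ b < i.1

namespace Circuit

variable {V : Type}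

/-- The set `T(g)` of terms associated with gate `g`: for an input gate the
singleton of its label, for an OR gate the union of the term sets of its two
direct predecessors, and for an AND gate the set of concatenations `t₁ t₂` of
terms of its two direct predecessors. A term is a word over variables and
Boolean constants. -/
inductive MemTerms (C : Circuit V) : Fin C.n → List (V ⊕ Bool) → Prop
  | var {i : Fin C.n} {v : V} : C.label i = .var v → MemTerms C i [Sum.inl v]
  | const {i : Fin C.n} {b : Bool} : C.label i = .const b → MemTerms C i [Sum.inr b]
  | or_left {i : Fin C.n} {a b : ℕ} {t : List (V ⊕ Bool)}
      (h : C.label i = .or a b) (ha : a < C.n) :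
      MemTerms C ⟨a, ha⟩ t → MemTerms C i t
  | or_right {i : Fin C.n} {a b : ℕ} {t : List (V ⊕ Bool)}
      (h : C.label i = .or a b) (hb : b < C.n) :
      MemTerms C ⟨b, hb⟩ t → MemTerms C i t
  | and {i : Fin C.n} {a b : ℕ} {t₁ t₂ : List (V ⊕ Bool)}
      (h : C.label i = .and a b) (ha : a < C.n) (hb : b < C.n) :
      MemTerms C ⟨a, ha⟩ t₁ → MemTerms C ⟨b, hb⟩ t₂ → MemTerms C i (t₁ ++ t₂)

end Circuit

/-- Evaluation of a single letter (variable or constant) of a term. -/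
def litEval {V : Type} (σ : V → Bool) : V ⊕ Bool → Bool
  | Sum.inl v => σ v
  | Sum.inr b => b

/-- A term evaluates to true iff the conjunction of its letters is true. -/
def termEval {V : Type} (σ : V → Bool) (t : List (V ⊕ Bool)) : Bool :=
  t.all (litEval σ)

/-- The (monotone Boolean) function computed at gate `g`: the disjunction,
over all terms `t ∈ T(g)`, of the conjunction represented by `t`. -/
def Circuit.gateFun {V : Type} (C : Circuit V) (g : Fin C.n) (σ : V → Bool) : Prop :=
  ∃ t : List (V ⊕ Bool), C.MemTerms g t ∧ termEval σ t = true

/-- A Boolean function depends on the variable `v`. -/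
def Depends {V : Type} [DecidableEq V] (f : (V → Bool) → Prop) (v : V) : Prop :=
  ∃ σ : V → Bool,
    ¬(f (Function.update σ v false) ↔ f (Function.update σ v true))

/-- A monotone Boolean circuit is multilinear if for every AND gate the
functions computed at its two direct predecessors share no variable. -/
def Circuit.Multilinear {V : Type} [DecidableEq V] (C : Circuit V) : Prop :=
  ∀ (i : Fin C.n) (a b : ℕ), C.label i = .and a b →
    ∀ (ha : a < C.n) (hb : b < C.n) (v : V),
      ¬(Depends (C.gateFun ⟨a, ha⟩) v ∧ Depends (C.gateFun ⟨b, hb⟩) v)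

/-- `S` (a conjunction of variables) is an implicant of `f`: whenever all the
variables of `S` are true, `f` is true. -/
def Implicant {V : Type} (f : (V → Bool) → Prop) (S : Finset V) : Prop :=
  ∀ σ : V → Bool, (∀ v ∈ S, σ v = true) → f σ

/-- A prime implicant: an implicant minimal with respect to included variables. -/
def PrimeImplicant {V : Type} (f : (V → Bool) → Prop) (S : Finset V) : Prop :=
  Implicant f S ∧ ∀ S' ⊂ S, ¬ Implicant f S'

/-- The set of variables occurring in a term. -/
def termVars {V : Type} (t : List (V ⊕ Bool)) : Set V := {v : V | Sum.inl v ∈ t}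

/-- A term `t` represents the monom with variable set `S` if the set of
variables occurring in `t` equals `S`. -/
def Represents {V : Type} (t : List (V ⊕ Bool)) (S : Finset V) : Prop :=
  termVars t = ↑S

/-- The circuit computes the form `F` (a family of monotone Boolean
functions), the function `F i` being computed at the output gate `out i`. -/
def Circuit.Computes {V ι : Type} (C : Circuit V) (out : ι → Fin C.n)
    (F : ι → (V → Bool) → Prop) : Prop :=
  ∀ (i : ι) (σ : V → Bool), C.gateFun (out i) σ ↔ F i σ

/-- The circuit (with output gates `out`, computing the form `F`) is
`q`-multilinear: for each prime implicant `S` of each `F i` there is a term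
`t ∈ T(out i)` representing `S` in which no variable occurs more than `q`
times. -/
def Circuit.QMultilinear {V ι : Type} [DecidableEq V] (C : Circuit V)
    (out : ι → Fin C.n) (F : ι → (V → Bool) → Prop) (q : ℕ) : Prop :=
  ∀ (i : ι) (S : Finset V), PrimeImplicant (F i) S →
    ∃ t : List (V ⊕ Bool), C.MemTerms (out i) t ∧ Represents t S ∧
      ∀ v : V, t.count (Sum.inl v) ≤ q

/-- The circuit is strictly `q`-multilinear: no term of any gate contains more
than `q` occurrences of a single variable. -/
def Circuit.StrictlyQMultilinear {V : Type} [DecidableEq V] (C : Circuit V) (q : ℕ) : Prop :=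
  ∀ (g : Fin C.n) (t : List (V ⊕ Bool)), C.MemTerms g t →
    ∀ v : V, t.count (Sum.inl v) ≤ q

/-- The size of a circuit: the number of its non-input gates. -/
def Circuit.size {V : Type} (C : Circuit V) : ℕ :=
  (Finset.univ.filter fun i : Fin C.n => (C.label i).isOp = true).card

/-- The number of AND gates of a circuit. -/
def Circuit.andGateCount {V : Type} (C : Circuit V) : ℕ :=
  (Finset.univ.filter fun i : Fin C.n => (C.label i).isAnd = true).card

/-- The number of OR gates of a circuit. -/
def Circuit.orGateCount {V : Type} (C : Circuit V) : ℕ :=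
  (Finset.univ.filter fun i : Fin C.n => (C.label i).isOr = true).card

/-- The circuit has no Boolean-constant input gates. -/
def Circuit.NoConstants {V : Type} (C : Circuit V) : Prop :=
  ∀ (i : Fin C.n) (b : Bool), C.label i ≠ .const b

/-- `AndDepth C g d`: there is a path from an input gate to the gate `g`
containing exactly `d` AND gates. -/
inductive Circuit.AndDepth {V : Type} (C : Circuit V) : Fin C.n → ℕ → Prop
  | input {i : Fin C.n} : (C.label i).isOp = false → AndDepth C i 0
  | or_step {i : Fin C.n} {a b p d : ℕ}
      (h : C.label i = .or a b) (hp : p = a ∨ p = b) (hpn : p < C.n) :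
      AndDepth C ⟨p, hpn⟩ d → AndDepth C i d
  | and_step {i : Fin C.n} {a b p d : ℕ}
      (h : C.label i = .and a b) (hp : p = a ∨ p = b) (hpn : p < C.n) :
      AndDepth C ⟨p, hpn⟩ d → AndDepth C i (d + 1)

/-- `AltDepth C g l d`: there is a path from an input gate to the gate `g`
whose non-input gates form exactly `d` blocks of consecutive OR gates and
consecutive AND gates, the last block consisting of OR gates (if
`l = some false`) or of AND gates (if `l = some true`); `l = none` when the
path consists of a single input gate. -/
inductive Circuit.AltDepth {V : Type} (C : Circuit V) : Fin C.n → Option Bool → ℕ → Prop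
  | input {i : Fin C.n} : (C.label i).isOp = false → AltDepth C i none 0
  | or_step {i : Fin C.n} {a b p : ℕ} {l : Option Bool} {d : ℕ}
      (h : C.label i = .or a b) (hp : p = a ∨ p = b) (hpn : p < C.n) :
      AltDepth C ⟨p, hpn⟩ l d →
      AltDepth C i (some false) (if l = some false then d else d + 1)
  | and_step {i : Fin C.n} {a b p : ℕ} {l : Option Bool} {d : ℕ}
      (h : C.label i = .and a b) (hp : p = a ∨ p = b) (hpn : p < C.n) :
      AltDepth C ⟨p, hpn⟩ l d →
      AltDepth C i (some true) (if l = some true then d else d + 1)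

/-- The alternation depth of the circuit (with output gates `out`) is at most `d`. -/
def Circuit.AltDepthLE {V ι : Type} (C : Circuit V) (out : ι → Fin C.n) (d : ℕ) : Prop :=
  ∀ (i : ι) (l : Option Bool) (c : ℕ), C.AltDepth (out i) l c → c ≤ d

/-- A `Π_d` circuit: alternation depth at most `d` and all output gates are AND gates. -/
def Circuit.IsPi {V ι : Type} (C : Circuit V) (out : ι → Fin C.n) (d : ℕ) : Prop :=
  (∀ i : ι, (C.label (out i)).isAnd = true) ∧ C.AltDepthLE out d

/-- A `Σ_d` circuit: alternation depth at most `d` and all output gates are OR gates. -/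
def Circuit.IsSigma {V ι : Type} (C : Circuit V) (out : ι → Fin C.n) (d : ℕ) : Prop :=
  (∀ i : ι, (C.label (out i)).isOr = true) ∧ C.AltDepthLE out d

/-- A monotone Boolean function. -/
def MonotoneFun {V : Type} (f : (V → Bool) → Prop) : Prop :=
  ∀ σ σ' : V → Bool, (∀ v : V, σ v = true → σ' v = true) → f σ → f σ'

/-- A semi-disjoint bilinear form on the variables `x_0,…,x_{n-1}` (the left
summands) and `y_0,…,y_{n-1}` (the right summands): a family of monotone
Boolean functions such that every prime implicant consists of exactly one
`x`-variable and one `y`-variable, for each function every variable occurs in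
at most one of its prime implicants, and the sets of prime implicants of
different functions of the family are pairwise disjoint. -/
def SemiDisjointBilinear {n : ℕ} {ι : Type}
    (F : ι → ((Fin n ⊕ Fin n) → Bool) → Prop) : Prop :=
  (∀ i : ι, MonotoneFun (F i)) ∧
  (∀ (i : ι) (S : Finset (Fin n ⊕ Fin n)), PrimeImplicant (F i) S →
    ∃ a b : Fin n, S = {Sum.inl a, Sum.inr b}) ∧
  (∀ (i : ι) (S S' : Finset (Fin n ⊕ Fin n)) (z : Fin n ⊕ Fin n),
    PrimeImplicant (F i) S → PrimeImplicant (F i) S' → z ∈ S → z ∈ S' → S = S') ∧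
  (∀ (i j : ι) (S : Finset (Fin n ⊕ Fin n)), i ≠ j →
    PrimeImplicant (F i) S → ¬ PrimeImplicant (F j) S)

/-- The total number of prime implicants of the form `F`. -/
noncomputable def totalPrimeImplicants {V ι : Type} (F : ι → (V → Bool) → Prop) : ℕ :=
  Nat.card {pr : ι × Finset V // PrimeImplicant (F pr.1) pr.2}

/-- A cell of the `k`-dimensional grid `[n]^k`. -/
abbrev Cell (k n : ℕ) := Fin k → Fin n

/-- The function `Isol_{k,n}`: for a `k`-dimensional `n × ⋯ × n` Boolean
matrix `σ`, it is true iff every line (a set of `n` entries obtained by fixing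
`k-1` indices and letting the remaining one, in direction `d`, range over `[n]`)
contains at least one `1`. -/
def IsolFun (k n : ℕ) (σ : Cell k n → Bool) : Prop :=
  ∀ (d : Fin k) (c : Cell k n), ∃ x : Cell k n,
    (∀ j : Fin k, j ≠ d → x j = c j) ∧ σ x = true

/-- Every line of the grid contains exactly one cell of `S`. -/
def ExactlyOnePerLine (k n : ℕ) (S : Finset (Cell k n)) : Prop :=
  ∀ (d : Fin k) (c : Cell k n),
    ∃! x : Cell k n, x ∈ S ∧ ∀ j : Fin k, j ≠ d → x j = c j

/-- `|SPI(Isol_{k,n})|`: the number of shortest prime implicants of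
`Isol_{k,n}`, i.e. the number of sets `S` of `n^{k-1}` cells of `[n]^k` such
that every line of the grid contains exactly one cell of `S`. -/
noncomputable def spiCount (k n : ℕ) : ℕ :=
  Set.ncard {S : Finset (Cell k n) |
    S.card = n ^ (k - 1) ∧ ExactlyOnePerLine k n S}

/-- The circuit obtained from `C` by replacing the gate `g` with the Boolean
constant `1`. -/
def Circuit.replaceByTrue {V : Type} (C : Circuit V) (g : Fin C.n) : Circuit V where
  n := C.n
  label := Function.update C.label g (GateLabel.const true)
  wf := by
    intro i a b hab
    rcases eq_or_ne i g with rfl | hig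
    · rw [Function.update_self] at hab
      rcases hab with h | h <;> exact GateLabel.noConfusion rfl (heq_of_eq h)
    · rw [Function.update_of_ne hig] at hab
      exact C.wf i a b hab

end MC

/-! Induct along the topological order of the gates. At an OR gate a prime implicant `S` is a
prime implicant of one of the two predecessors. At an AND gate `S = S₁ ∪ S₂` with `Sᵢ` prime
implicants of the predecessors; every variable of a prime implicant of a monotone function is
essential, so multilinearity makes `S₁` and `S₂` disjoint, and concatenating terms representing
them with no repeated variable gives such a term for `S`. -/

namespace MC

/-- `List.count` on terms uses the derived `BEq` of `Sum`, which comes without a `LawfulBEq`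
instance. -/
instance instLawfulBEqSum {α β : Type*} [BEq α] [LawfulBEq α] [BEq β] [LawfulBEq β] :
    LawfulBEq (α ⊕ β) where
  eq_of_beq {a b} h := by
    cases a <;> cases b
    · exact congrArg Sum.inl (eq_of_beq (α := α) h)
    · exact absurd h Bool.false_ne_true
    · exact absurd h Bool.false_ne_true
    · exact congrArg Sum.inr (eq_of_beq (α := β) h)
  rfl {a} := by
    cases a with
    | inl a => exact beq_self_eq_true a
    | inr b => exact beq_self_eq_true b

section BooleanFunctions

variable {V : Type} {f g : (V → Bool) → Prop} {S : Finset V}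

theorem MonotoneFun.implicant_of_apply [DecidableEq V] (hf : MonotoneFun f)
    (h : f fun v => decide (v ∈ S)) : Implicant f S :=
  fun σ hσ => hf _ σ (fun v hv => hσ v (by simpa using hv)) h

theorem PrimeImplicant.of_imp (hfg : ∀ σ, f σ → g σ) (hf : Implicant f S)
    (hS : PrimeImplicant g S) : PrimeImplicant f S :=
  ⟨hf, fun S' hS' hf' => hS.2 S' hS' fun σ hσ => hfg σ (hf' σ hσ)⟩

theorem PrimeImplicant.or_cases [DecidableEq V] (hf : MonotoneFun f) (hg : MonotoneFun g)
    (hS : PrimeImplicant (fun σ => f σ ∨ g σ) S) : PrimeImplicant f S ∨ PrimeImplicant g S :=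
  (hS.1 _ fun v hv => by simpa using hv).imp
    (fun h => hS.of_imp (fun _ => Or.inl) (hf.implicant_of_apply h))
    (fun h => hS.of_imp (fun _ => Or.inr) (hg.implicant_of_apply h))

theorem Implicant.exists_primeImplicant_subset (hS : Implicant f S) :
    ∃ S' ⊆ S, PrimeImplicant f S' := by
  induction S using Finset.strongInduction with
  | _ S IH =>
    by_cases h : ∃ S' ⊂ S, Implicant f S'
    · obtain ⟨S', hS'S, hS'⟩ := h
      obtain ⟨S'', hS''S', hS''⟩ := IH S' hS'S hS'
      exact ⟨S'', hS''S'.trans hS'S.subset, hS''⟩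
    · exact ⟨S, subset_rfl, hS, fun S' hS'S hS' => h ⟨S', hS'S, hS'⟩⟩

theorem PrimeImplicant.exists_union_of_and [DecidableEq V]
    (hS : PrimeImplicant (fun σ => f σ ∧ g σ) S) :
    ∃ S₁ S₂, PrimeImplicant f S₁ ∧ PrimeImplicant g S₂ ∧ S₁ ∪ S₂ = S := by
  obtain ⟨S₁, hS₁S, hS₁⟩ := Implicant.exists_primeImplicant_subset fun σ hσ => (hS.1 σ hσ).1
  obtain ⟨S₂, hS₂S, hS₂⟩ := Implicant.exists_primeImplicant_subset fun σ hσ => (hS.1 σ hσ).2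
  have hunion : Implicant (fun σ => f σ ∧ g σ) (S₁ ∪ S₂) := fun σ hσ =>
    ⟨hS₁.1 σ fun v hv => hσ v (Finset.mem_union_left _ hv),
      hS₂.1 σ fun v hv => hσ v (Finset.mem_union_right _ hv)⟩
  refine ⟨S₁, S₂, hS₁, hS₂, ?_⟩
  by_contra hne
  exact hS.2 _ ((Finset.union_subset hS₁S hS₂S).lt_of_ne hne) hunion

theorem PrimeImplicant.depends [DecidableEq V] (hf : MonotoneFun f) (hS : PrimeImplicant f S)
    {v : V} (hv : v ∈ S) : Depends f v := by
  obtain ⟨σ, hσ, hfσ⟩ : ∃ σ, (∀ w ∈ S.erase v, σ w = true) ∧ ¬ f σ := by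
    simpa [Implicant] using hS.2 _ (Finset.erase_ssubset hv)
  refine ⟨σ, fun hiff => hfσ (hf _ σ (fun w hw => ?_) (hiff.2 (hS.1 _ fun w hw => ?_)))⟩
  · rcases eq_or_ne w v with rfl | hwv
    · simp at hw
    · rwa [Function.update_of_ne hwv] at hw
  · rcases eq_or_ne w v with rfl | hwv
    · simp
    · rw [Function.update_of_ne hwv]
      exact hσ w (Finset.mem_erase.2 ⟨hwv, hw⟩)

end BooleanFunctions

section Terms

variable {V : Type} {t t₁ t₂ : List (V ⊕ Bool)}

theorem termEval_eq_true_iff {σ : V → Bool} :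
    termEval σ t = true ↔ ∀ x ∈ t, litEval σ x = true := by
  simp [termEval]

theorem termVars_append : termVars (t₁ ++ t₂) = termVars t₁ ∪ termVars t₂ := by
  ext v
  simp [termVars]

theorem Represents.append [DecidableEq V] {S₁ S₂ : Finset V} (h₁ : Represents t₁ S₁) (h₂ : Represents t₂ S₂) :
    Represents (t₁ ++ t₂) (S₁ ∪ S₂) := by
  rw [Represents, termVars_append, h₁, h₂, Finset.coe_union]

theorem count_inl_append_le_one [DecidableEq V] (h : Disjoint (termVars t₁) (termVars t₂))
    (h₁ : ∀ v, t₁.count (Sum.inl v) ≤ 1) (h₂ : ∀ v, t₂.count (Sum.inl v) ≤ 1) (v : V) :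
    (t₁ ++ t₂).count (Sum.inl v) ≤ 1 := by
  rw [List.count_append]
  by_cases hv : Sum.inl v ∈ t₁
  · have : Sum.inl v ∉ t₂ := Set.disjoint_left.1 h hv
    rw [List.count_eq_zero.2 this]
    exact h₁ v
  · rw [List.count_eq_zero.2 hv, zero_add]
    exact h₂ v

end Terms

namespace Circuit

variable {V : Type} {C : Circuit V} {i : Fin C.n} {a b : ℕ} {t : List (V ⊕ Bool)}

theorem length_eq_one_of_memTerms (h : (C.label i).isOp = false) (ht : C.MemTerms i t) :
    t.length = 1 := by
  cases ht <;> simp_all [GateLabel.isOp]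

theorem memTerms_or (h : C.label i = .or a b) (ha : a < C.n) (hb : b < C.n)
    (ht : C.MemTerms i t) : C.MemTerms ⟨a, ha⟩ t ∨ C.MemTerms ⟨b, hb⟩ t := by
  cases ht <;> simp_all

theorem memTerms_and (h : C.label i = .and a b) (ha : a < C.n) (hb : b < C.n)
    (ht : C.MemTerms i t) :
    ∃ t₁ t₂, C.MemTerms ⟨a, ha⟩ t₁ ∧ C.MemTerms ⟨b, hb⟩ t₂ ∧ t = t₁ ++ t₂ := by
  cases ht with
  | and h' _ _ ht₁ ht₂ =>
    obtain ⟨rfl, rfl⟩ : _ ∧ _ := by simpa [h] using h'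
    exact ⟨_, _, ht₁, ht₂, rfl⟩
  | _ => simp_all

theorem gateFun_monotone (g : Fin C.n) : MonotoneFun (C.gateFun g) := by
  rintro σ σ' hσσ' ⟨t, ht, hσ⟩
  refine ⟨t, ht, termEval_eq_true_iff.2 fun x hx => ?_⟩
  have hx := termEval_eq_true_iff.1 hσ x hx
  cases x with
  | inl v => exact hσσ' v hx
  | inr c => exact hx

theorem gateFun_eq_or (h : C.label i = .or a b) (ha : a < C.n) (hb : b < C.n) :
    C.gateFun i = fun σ => C.gateFun ⟨a, ha⟩ σ ∨ C.gateFun ⟨b, hb⟩ σ := by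
  ext σ
  constructor
  · rintro ⟨t, ht, hσ⟩
    exact (memTerms_or h ha hb ht).imp (⟨t, ·, hσ⟩) (⟨t, ·, hσ⟩)
  · rintro (⟨t, ht, hσ⟩ | ⟨t, ht, hσ⟩)
    · exact ⟨t, .or_left h ha ht, hσ⟩
    · exact ⟨t, .or_right h hb ht, hσ⟩

theorem gateFun_eq_and (h : C.label i = .and a b) (ha : a < C.n) (hb : b < C.n) :
    C.gateFun i = fun σ => C.gateFun ⟨a, ha⟩ σ ∧ C.gateFun ⟨b, hb⟩ σ := by
  ext σ
  constructor
  · rintro ⟨t, ht, hσ⟩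
    obtain ⟨t₁, t₂, ht₁, ht₂, rfl⟩ := memTerms_and h ha hb ht
    simp only [termEval, List.all_append, Bool.and_eq_true] at hσ
    exact ⟨⟨t₁, ht₁, hσ.1⟩, ⟨t₂, ht₂, hσ.2⟩⟩
  · rintro ⟨⟨t₁, ht₁, hσ₁⟩, ⟨t₂, ht₂, hσ₂⟩⟩
    exact ⟨t₁ ++ t₂, .and h ha hb ht₁ ht₂, by simp_all [termEval]⟩

/-- Evaluating at the indicator of `S` yields a term whose variables lie in `S` and whose
constants are all `1`; its variables then form an implicant, so by primality they are all of `S`. -/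
theorem exists_memTerms_represents [DecidableEq V] {g : Fin C.n} {S : Finset V}
    (hS : PrimeImplicant (C.gateFun g) S) : ∃ t, C.MemTerms g t ∧ Represents t S := by
  obtain ⟨t, ht, hχ⟩ := hS.1 (fun v => decide (v ∈ S)) fun v hv => by simpa using hv
  have hχ' := termEval_eq_true_iff.1 hχ
  have hsub : termVars t ⊆ S := fun v hv => by simpa [litEval] using hχ' _ hv
  have himp : Implicant (C.gateFun g) (S.filter fun v => Sum.inl v ∈ t) := by
    refine fun σ hσ => ⟨t, ht, termEval_eq_true_iff.2 fun x hx => ?_⟩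
    cases x with
    | inl v => exact hσ v (Finset.mem_filter.2 ⟨hsub hx, hx⟩)
    | inr c => exact hχ' _ hx
  have hfilter : S.filter (fun v => Sum.inl v ∈ t) = S := by
    by_contra hne
    exact hS.2 _ ((Finset.filter_subset _ S).lt_of_ne hne) himp
  refine ⟨t, ht, hsub.antisymm fun v hv => ?_⟩
  rw [← hfilter] at hv
  exact (Finset.mem_filter.1 hv).2

theorem Multilinear.disjoint [DecidableEq V] (hml : C.Multilinear) (h : C.label i = .and a b)
    (ha : a < C.n) (hb : b < C.n) {S₁ S₂ : Finset V}
    (hS₁ : PrimeImplicant (C.gateFun ⟨a, ha⟩) S₁) (hS₂ : PrimeImplicant (C.gateFun ⟨b, hb⟩) S₂) :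
    Disjoint S₁ S₂ :=
  Finset.disjoint_left.2 fun v hv₁ hv₂ => hml i a b h ha hb v
    ⟨hS₁.depends (gateFun_monotone _) hv₁, hS₂.depends (gateFun_monotone _) hv₂⟩

end Circuit

open Circuit

/-- Every monotone multilinear Boolean circuit is `1`-multilinear: for each
output gate `o` and each prime implicant `S` of the function computed at `o`,
there is a term `t ∈ T(o)` representing `S` in which no variable occurs more
than once. -/
theorem multilinear_is_one_multilinear {V : Type} [DecidableEq V] (C : Circuit V)
    (hml : C.Multilinear) (o : Fin C.n) (S : Finset V)
    (hS : PrimeImplicant (C.gateFun o) S) :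
    ∃ t : List (V ⊕ Bool), C.MemTerms o t ∧ Represents t S ∧
      ∀ v : V, t.count (Sum.inl v) ≤ 1 := by
  induction o using WellFoundedLT.induction generalizing S with
  | _ g IH =>
  match hlab : C.label g with
  | .var _ | .const _ =>
    obtain ⟨t, ht, hrep⟩ := exists_memTerms_represents hS
    have hlen := length_eq_one_of_memTerms (by simp [hlab, GateLabel.isOp]) ht
    exact ⟨t, ht, hrep, fun v => hlen ▸ List.count_le_length⟩
  | .or a b =>
    obtain ⟨hag, hbg⟩ := C.wf g a b (.inl hlab)
    rw [gateFun_eq_or hlab (hag.trans g.2) (hbg.trans g.2)] at hS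
    rcases hS.or_cases (gateFun_monotone _) (gateFun_monotone _) with hSa | hSb
    · obtain ⟨t, ht, hrep, hcount⟩ := IH _ hag S hSa
      exact ⟨t, .or_left hlab _ ht, hrep, hcount⟩
    · obtain ⟨t, ht, hrep, hcount⟩ := IH _ hbg S hSb
      exact ⟨t, .or_right hlab _ ht, hrep, hcount⟩
  | .and a b =>
    obtain ⟨hag, hbg⟩ := C.wf g a b (.inr hlab)
    rw [gateFun_eq_and hlab (hag.trans g.2) (hbg.trans g.2)] at hS
    obtain ⟨S₁, S₂, hS₁, hS₂, rfl⟩ := hS.exists_union_of_and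
    obtain ⟨t₁, ht₁, hrep₁, hcount₁⟩ := IH _ hag S₁ hS₁
    obtain ⟨t₂, ht₂, hrep₂, hcount₂⟩ := IH _ hbg S₂ hS₂
    refine ⟨t₁ ++ t₂, .and hlab _ _ ht₁ ht₂, hrep₁.append hrep₂,
      count_inl_append_le_one ?_ hcount₁ hcount₂⟩
    rw [hrep₁, hrep₂]
    exact Finset.disjoint_coe.2 (hml.disjoint hlab _ _ hS₁ hS₂)

end MC
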